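/- Let f be the linear involution of Λ(V*) defined as follows: f is the identity on scalars and on V*, and for q ≥ 2 every ω ∈ Λ^q(V*) has a unique decomposition ω = e¹ ∧ ξ + e² ∧ η + ζ with ξ ∈ Λ^{q−1}(span(e², e³, …)), η ∈ Λ^{q−1}(span(e³, e⁴, …)), ζ ∈ Λ^q(span(e³, e⁴, …)), and one sets f(ω) := e¹ ∧ ξ + e² ∧ (η + D₁ξ) + ζ. Then for all ω ∈ Λ(V*) one has f(d₀ω) = d₂(fω) and f(d₂ω) = d₀(fω); consequently f maps d₀-cocycles bijectively onto d₂-cocycles and d₀-coboundaries bijectively onto d₂-coboundaries. -/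

import Mathlib

set_option maxSynthPendingDepth 3

/-- The field `ℤ₂ = ℤ/2ℤ`. -/
abbrev K2 : Type := ZMod 2

/-- The exterior algebra over `ℤ₂` on generators `e 1, e 2, …`, realized as the free
`ℤ₂`-module on the square-free monomials `e^S`, indexed by finite sets `S` of indices
(over `ℤ₂` all signs are trivial). -/
abbrev Lam : Type := Finset ℕ →₀ K2

/-- The generator `eⁱ` (the `i`-th dual basis vector). -/
noncomputable def e (i : ℕ) : Lam := Finsupp.single {i} 1

/-- The wedge product: on monomials, `e^S ∧ e^T = e^(S ∪ T)` if `S` and `T` are disjoint and `0`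
otherwise (there are no signs over `ℤ₂`); extended bilinearly. -/
noncomputable def wedge (x y : Lam) : Lam :=
  x.sum fun S a => y.sum fun T b =>
    if Disjoint S T then Finsupp.single (S ∪ T) (a * b) else 0

/-- A derivation of the exterior algebra (over `ℤ₂` all signs are trivial, so the relevant
operators are ordinary derivations). -/
def IsDerivation (D : Module.End K2 Lam) : Prop :=
  ∀ x y : Lam, D (wedge x y) = wedge (D x) y + wedge x (D y)

/-- The subalgebra `Λ(span (eⁱ : i ∈ I))` of the exterior algebra: the span of the monomials
`e^S` with all indices in `I`. -/
noncomputable def lamOn (I : Set ℕ) : Submodule K2 Lam :=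
  Submodule.span K2 {x | ∃ S : Finset ℕ, ↑S ⊆ I ∧ x = Finsupp.single S (1 : K2)}

/-- `Λ^q`: the span of the monomials of rank `q` with indices in `I`. -/
noncomputable def rankPiece (I : Set ℕ) (q : ℕ) : Submodule K2 Lam :=
  Submodule.span K2
    {x | ∃ S : Finset ℕ, ↑S ⊆ I ∧ S.card = q ∧ x = Finsupp.single S (1 : K2)}

/-- `Λ^q_k`: the span of the monomials of rank `q` and degree (weight) `k`, indices in `I`. -/
noncomputable def gradedPiece (I : Set ℕ) (q k : ℕ) : Submodule K2 Lam :=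
  Submodule.span K2
    {x | ∃ S : Finset ℕ, ↑S ⊆ I ∧ S.card = q ∧ S.sum id = k ∧ x = Finsupp.single S (1 : K2)}

/-- The cohomology class in `Z ⧸ (B ∩ Z)` of a cocycle `x ∈ Z` (defined to be `0` if `x ∉ Z`). -/
noncomputable def cls (Z B : Submodule K2 Lam) (x : Lam) :
    ↥Z ⧸ Submodule.comap Z.subtype B := by
  classical exact if hx : x ∈ Z then Submodule.Quotient.mk ⟨x, hx⟩ else 0

/-- `F(ω, eⁱ) = Σ_{l ≥ 0} (Dˡ ω) ∧ e^{i+1+l}`, truncated at `l < N`; as soon as `D^N ω = 0`,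
this is the full (finite) sum. -/
noncomputable def Ftrunc (D : Module.End K2 Lam) (N : ℕ) (ω : Lam) (i : ℕ) : Lam :=
  ∑ l ∈ Finset.range N, wedge ((D ^ l) ω) (e (i + 1 + l))

/-- The largest index `i_q` of a monomial `e^S`, `S = {i₁ < … < i_q}`. -/
def maxIdx (S : Finset ℕ) : ℕ := S.sup id

/-- `F(e^S, eⁱ)` for a monomial `e^S`: since `D` lowers the degree by one, truncating the sum
at the degree of `e^S` already yields the full sum `Σ_{l ≥ 0} (Dˡ e^S) ∧ e^{i+1+l}`. -/
noncomputable def Fmono (D : Module.End K2 Lam) (S : Finset ℕ) (i : ℕ) : Lam :=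
  Ftrunc D (S.sum id + 1) (Finsupp.single S 1) i

/-- `F(eⁱ, eⁱ) = eⁱ ∧ e^{i+1} + e^{i−1} ∧ e^{i+2} + ⋯ + e² ∧ e^{2i−1}`. -/
noncomputable def F1 (i : ℕ) : Lam :=
  ∑ l ∈ Finset.range (i - 1), wedge (e (i - l)) (e (i + 1 + l))

/-!
A derivation of `Λ(e¹, e², …)` is determined by its values on the generators, so comparing
generators gives `d₀ = e¹ ∧ D₁` and `d₂ = e¹ ∧ D₁ + e² ∧ D₁²` (in characteristic `2`, `D₁²` is again
a derivation). With `ι` the contraction with `e₁`, which picks `ξ` out of `e¹ ∧ ξ + e² ∧ η + ζ`,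
the map is `f = 1 + e² ∧ D₁ ι`. Since `D₁` never produces `e¹`, the derivation `[ι, D₁]` kills all
generators, so `ι` and `D₁` commute; then `f d₀ = d₂ f`, `f d₂ = d₀ f` and `f² = 1` reduce to
`e² ∧ e² = 0` and `2 = 0`. An involution intertwining `d₀` and `d₂` in both directions maps
cocycles onto cocycles and coboundaries onto coboundaries bijectively.
-/

open Finsupp

lemma lam_add_self (v : Lam) : v + v = 0 := by
  rw [← two_smul K2 v, show (2 : K2) = 0 from rfl, zero_smul]

lemma k2_eq_zero_or_one (c : K2) : c = 0 ∨ c = 1 := by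
  revert c; decide

section Wedge

lemma wedge_single (S T : Finset ℕ) (a b : K2) :
    wedge (single S a) (single T b) = if Disjoint S T then single (S ∪ T) (a * b) else 0 := by
  simp [wedge, -single_mul]

@[simp] lemma wedge_zero_left (y : Lam) : wedge 0 y = 0 := by simp [wedge]

@[simp] lemma wedge_zero_right (x : Lam) : wedge x 0 = 0 := by simp [wedge]

lemma wedge_add_left (x y z : Lam) : wedge (x + y) z = wedge x z + wedge y z := by
  unfold wedge
  refine sum_add_index' (fun _ => by simp) fun S a b => ?_
  rw [← sum_add]
  exact sum_congr fun T _ => by split_ifs <;> simp [add_mul]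

lemma wedge_add_right (x y z : Lam) : wedge x (y + z) = wedge x y + wedge x z := by
  unfold wedge
  rw [← sum_add]
  refine sum_congr fun S _ => sum_add_index' (fun _ => by simp) fun T b c => ?_
  split_ifs <;> simp [mul_add]

lemma wedge_smul_right (c : K2) (x y : Lam) : wedge x (c • y) = c • wedge x y := by
  rcases k2_eq_zero_or_one c with rfl | rfl <;> simp

lemma wedge_comm (x y : Lam) : wedge x y = wedge y x := by
  induction x using Finsupp.induction_linear with
  | zero => simp
  | add f g hf hg => rw [wedge_add_left, wedge_add_right, hf, hg]
  | single S a =>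
    induction y using Finsupp.induction_linear with
    | zero => simp
    | add f g hf hg => rw [wedge_add_left, wedge_add_right, hf, hg]
    | single T b => simp only [wedge_single, disjoint_comm, Finset.union_comm, mul_comm]

lemma wedge_assoc (x y z : Lam) : wedge (wedge x y) z = wedge x (wedge y z) := by
  induction x using Finsupp.induction_linear with
  | zero => simp
  | add f g hf hg => rw [wedge_add_left, wedge_add_left, wedge_add_left, hf, hg]
  | single S a =>
  induction y using Finsupp.induction_linear with
  | zero => simp
  | add f g hf hg => rw [wedge_add_right, wedge_add_left, wedge_add_left, wedge_add_right, hf, hg]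
  | single T b =>
  induction z using Finsupp.induction_linear with
  | zero => simp
  | add f g hf hg => rw [wedge_add_right, wedge_add_right, wedge_add_right, hf, hg]
  | single U c =>
    by_cases hST : Disjoint S T <;> by_cases hTU : Disjoint T U <;> by_cases hSU : Disjoint S U <;>
      simp [wedge_single, hST, hTU, hSU, Finset.union_assoc, mul_assoc, -single_mul]

lemma wedge_left_comm (x y z : Lam) : wedge x (wedge y z) = wedge y (wedge x z) := by
  rw [← wedge_assoc, wedge_comm x y, wedge_assoc]

lemma one_wedge (x : Lam) : wedge (single ∅ 1) x = x := by
  simp [wedge, -single_mul]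

lemma e_wedge_single (i : ℕ) (T : Finset ℕ) (b : K2) :
    wedge (e i) (single T b) = if i ∈ T then 0 else single (insert i T) b := by
  by_cases h : i ∈ T <;> simp [e, wedge_single, h]

lemma e_wedge_self (i : ℕ) : wedge (e i) (e i) = 0 := by
  rw [e, wedge_single, if_neg (by simp)]

lemma e_wedge_e_wedge (i : ℕ) (z : Lam) : wedge (e i) (wedge (e i) z) = 0 := by
  rw [← wedge_assoc, e_wedge_self, wedge_zero_left]

noncomputable def wedgeLeft (a : Lam) : Module.End K2 Lam where
  toFun := wedge a
  map_add' := wedge_add_right a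
  map_smul' c x := wedge_smul_right c a x

@[simp] lemma wedgeLeft_apply (a x : Lam) : wedgeLeft a x = wedge a x := rfl

lemma wedge_sub_right (x y z : Lam) : wedge x (y - z) = wedge x y - wedge x z :=
  map_sub (wedgeLeft x) y z

lemma wedge_sub_left (x y z : Lam) : wedge (x - y) z = wedge x z - wedge y z := by
  rw [wedge_comm, wedge_sub_right, wedge_comm z, wedge_comm z]

end Wedge

section LamOn

variable {I : Set ℕ}

lemma single_mem_lamOn {S : Finset ℕ} (hS : ↑S ⊆ I) : single S (1 : K2) ∈ lamOn I :=
  Submodule.subset_span ⟨S, hS, rfl⟩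

lemma e_mem_lamOn {i : ℕ} (hi : i ∈ I) : e i ∈ lamOn I :=
  single_mem_lamOn (by simpa using hi)

lemma mem_lamOn_univ (x : Lam) : x ∈ lamOn Set.univ := by
  induction x using Finsupp.induction_linear with
  | zero => exact zero_mem _
  | add x y hx hy => exact add_mem hx hy
  | single S a =>
    rw [← mul_one a, ← smul_eq_mul, ← smul_single]
    exact Submodule.smul_mem _ a (single_mem_lamOn (Set.subset_univ _))

theorem lamOn_induction {P : Lam → Prop} (zero : P 0) (add : ∀ x y, P x → P y → P (x + y))
    (one : P (single ∅ 1))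
    (e_wedge : ∀ i ∈ I, ∀ S : Finset ℕ, ↑S ⊆ I → P (single S 1) → P (wedge (e i) (single S 1)))
    {x : Lam} (hx : x ∈ lamOn I) : P x := by
  induction hx using Submodule.span_induction with
  | mem x hx =>
    obtain ⟨S, hS, rfl⟩ := hx
    induction S using Finset.induction_on with
    | empty => exact one
    | insert i S hi ih =>
      rw [Finset.coe_insert, Set.insert_subset_iff] at hS
      have h := e_wedge i hS.1 S hS.2 (ih hS.2)
      rwa [e_wedge_single, if_neg hi] at h
  | zero => exact zero
  | add x y _ _ hx hy => exact add x y hx hy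
  | smul c x _ hx => rcases k2_eq_zero_or_one c with rfl | rfl <;> simpa

lemma e_wedge_mem_lamOn {i : ℕ} (hi : i ∈ I) {z : Lam} (hz : z ∈ lamOn I) :
    wedge (e i) z ∈ lamOn I := by
  refine (Submodule.span_le (p := (lamOn I).comap (wedgeLeft (e i))).2 ?_) hz
  rintro _ ⟨S, hS, rfl⟩
  simp only [SetLike.mem_coe, Submodule.mem_comap, wedgeLeft_apply, e_wedge_single]
  split_ifs
  · exact zero_mem _
  · exact single_mem_lamOn (by simpa using Set.insert_subset hi hS)

lemma wedge_mem_lamOn {x y : Lam} (hx : x ∈ lamOn I) (hy : y ∈ lamOn I) :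
    wedge x y ∈ lamOn I := by
  refine lamOn_induction (P := fun x => ∀ y ∈ lamOn I, wedge x y ∈ lamOn I) ?_ ?_ ?_ ?_ hx y hy
  · exact fun _ _ => by simp
  · exact fun x x' hx hx' y hy => by rw [wedge_add_left]; exact add_mem (hx y hy) (hx' y hy)
  · exact fun y hy => by rwa [one_wedge]
  · exact fun i hi S _ hS y hy => by rw [wedge_assoc]; exact e_wedge_mem_lamOn hi (hS y hy)

end LamOn

section Derivation

variable {D D' : Module.End K2 Lam}

lemma IsDerivation.map_one (hD : IsDerivation D) : D (single ∅ 1) = 0 := by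
  have h := hD (single ∅ 1) (single ∅ 1)
  rw [one_wedge, one_wedge, wedge_comm, one_wedge] at h
  exact h.trans (lam_add_self _)

lemma IsDerivation.map_wedge_of_map_eq_zero (hD : IsDerivation D) {a : Lam} (ha : D a = 0)
    (z : Lam) : D (wedge a z) = wedge a (D z) := by
  rw [hD, ha, wedge_zero_left, zero_add]

lemma isDerivation_zero : IsDerivation 0 := fun _ _ => by simp

lemma IsDerivation.add (hD : IsDerivation D) (hD' : IsDerivation D') : IsDerivation (D + D') :=
  fun x y => by
    simp only [LinearMap.add_apply, hD x y, hD' x y, wedge_add_left, wedge_add_right]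
    abel

lemma IsDerivation.commutator (hD : IsDerivation D) (hD' : IsDerivation D') :
    IsDerivation (D * D' - D' * D) := fun x y => by
  simp only [LinearMap.sub_apply, Module.End.mul_apply, hD x y, hD' x y, map_add, hD _ y,
    hD x, hD' _ y, hD' x, wedge_sub_left, wedge_sub_right]
  abel

/-- In characteristic `2` the cross term `2 Dx ∧ Dy` vanishes. -/
lemma IsDerivation.mul_self (hD : IsDerivation D) : IsDerivation (D * D) := fun x y => by
  simp only [Module.End.mul_apply, hD x y, map_add, hD _ y, hD x]
  rw [add_assoc, ← add_assoc (wedge (D x) (D y)), lam_add_self, zero_add]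

lemma IsDerivation.wedgeLeft_mul (hD : IsDerivation D) (a : Lam) :
    IsDerivation (wedgeLeft a * D) := fun x y => by
  simp only [Module.End.mul_apply, wedgeLeft_apply, hD x y, wedge_add_right, wedge_assoc,
    wedge_left_comm a x]

lemma isDerivation_of_e_wedge {T : Module.End K2 Lam} (h1 : T (single ∅ 1) = 0)
    (he : ∀ i z, T (wedge (e i) z) = wedge (T (e i)) z + wedge (e i) (T z)) :
    IsDerivation T := fun x => by
  refine lamOn_induction (P := fun x => ∀ y, T (wedge x y) = wedge (T x) y + wedge x (T y))
    (by simp) (fun x x' hx hx' y => ?_) (fun y => ?_) (fun i _ S _ hS y => ?_) (mem_lamOn_univ x)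
  · rw [wedge_add_left, map_add, hx, hx', map_add, wedge_add_left, wedge_add_left]
    abel
  · rw [one_wedge, h1, wedge_zero_left, zero_add, one_wedge]
  · rw [wedge_assoc, he, hS, he, wedge_add_right, wedge_add_left, wedge_assoc, wedge_assoc,
      wedge_assoc, add_assoc]

section LamOn

variable {I : Set ℕ}

lemma IsDerivation.eqOn_lamOn (hD : IsDerivation D) (hD' : IsDerivation D')
    (h : ∀ i ∈ I, D (e i) = D' (e i)) : Set.EqOn D D' (lamOn I) := fun x hx =>
  lamOn_induction (P := fun x => D x = D' x) (by simp)
    (fun x y hx hy => by rw [map_add, map_add, hx, hy]) (by rw [hD.map_one, hD'.map_one])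
    (fun i hi S _ hS => by rw [hD, hD', h i hi, hS]) hx

lemma IsDerivation.mapsTo_lamOn (hD : IsDerivation D) (h : ∀ i ∈ I, D (e i) ∈ lamOn I) :
    Set.MapsTo D (lamOn I) (lamOn I) := fun x hx =>
  lamOn_induction (P := fun x => D x ∈ lamOn I) (by simp)
    (fun x y hx hy => by rw [map_add]; exact add_mem hx hy) (by simp [hD.map_one])
    (fun i hi S hS hDS => by
      rw [hD]
      exact add_mem (wedge_mem_lamOn (h i hi) (single_mem_lamOn hS)) (e_wedge_mem_lamOn hi hDS))
    hx

end LamOn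

end Derivation

section Contraction

noncomputable def contract (j : ℕ) : Module.End K2 Lam :=
  lsum K2 fun S => if j ∈ S then lsingle (S.erase j) else 0

lemma contract_single (j : ℕ) (S : Finset ℕ) (a : K2) :
    contract j (single S a) = if j ∈ S then single (S.erase j) a else 0 := by
  rw [contract, lsum_single]
  split_ifs <;> rfl

lemma contract_e (i j : ℕ) : contract j (e i) = if i = j then single ∅ 1 else 0 := by
  by_cases h : i = j <;> simp [e, contract_single, h, eq_comm]

lemma contract_e_wedge (i j : ℕ) (z : Lam) :
    contract j (wedge (e i) z) = wedge (contract j (e i)) z + wedge (e i) (contract j z) := by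
  induction z using Finsupp.induction_linear with
  | zero => simp
  | add z z' hz hz' =>
    rw [wedge_add_right, map_add, hz, hz', map_add, wedge_add_right, wedge_add_right]
    abel
  | single T b =>
    rw [contract_e]
    by_cases hij : i = j
    · subst hij
      by_cases hiT : i ∈ T
      · simp [contract_single, e_wedge_single, hiT, Finset.insert_erase, one_wedge, lam_add_self]
      · simp [contract_single, e_wedge_single, hiT, one_wedge]
    · by_cases hiT : i ∈ T <;> by_cases hjT : j ∈ T <;>
        simp [contract_single, e_wedge_single, hij, hiT, hjT, Ne.symm hij, Finset.erase_insert_of_ne]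

lemma isDerivation_contract (j : ℕ) : IsDerivation (contract j) :=
  isDerivation_of_e_wedge (by simp [contract_single]) fun i z => contract_e_wedge i j z

lemma contract_one_e_one_wedge (z : Lam) :
    contract 1 (wedge (e 1) z) = z + wedge (e 1) (contract 1 z) := by
  rw [contract_e_wedge, contract_e, if_pos rfl, one_wedge]

lemma contract_one_e_two_wedge (z : Lam) :
    contract 1 (wedge (e 2) z) = wedge (e 2) (contract 1 z) := by
  rw [contract_e_wedge, contract_e, if_neg (by decide), wedge_zero_left, zero_add]

lemma contract_eq_zero_of_mem_lamOn {I : Set ℕ} {j : ℕ} (hj : j ∉ I) {x : Lam}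
    (hx : x ∈ lamOn I) : contract j x = 0 :=
  (isDerivation_contract j).eqOn_lamOn isDerivation_zero
    (fun i hi => by rw [contract_e, if_neg (ne_of_mem_of_not_mem hi hj)]; rfl) hx

lemma mapsTo_contract_lamOn {I : Set ℕ} (j : ℕ) :
    Set.MapsTo (contract j) (lamOn I) (lamOn I) :=
  (isDerivation_contract j).mapsTo_lamOn fun i _ => by
    rw [contract_e]
    split_ifs
    · exact single_mem_lamOn (by simp)
    · exact zero_mem _

end Contraction

section Interweaving

variable {D : Module.End K2 Lam}

noncomputable def dZero (D : Module.End K2 Lam) : Module.End K2 Lam :=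
  wedgeLeft (e 1) * D

noncomputable def dTwo (D : Module.End K2 Lam) : Module.End K2 Lam :=
  wedgeLeft (e 1) * D + wedgeLeft (e 2) * (D * D)

/-- `contract 1` extracts `ξ` from `e¹ ∧ ξ + e² ∧ η + ζ`, so this is the map `f` of the paper. -/
noncomputable def interweave (D : Module.End K2 Lam) : Module.End K2 Lam :=
  1 + wedgeLeft (e 2) * D * contract 1

lemma dZero_apply (x : Lam) : dZero D x = wedge (e 1) (D x) := rfl

lemma dTwo_apply (x : Lam) : dTwo D x = wedge (e 1) (D x) + wedge (e 2) (D (D x)) := rfl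

lemma interweave_apply (x : Lam) :
    interweave D x = x + wedge (e 2) (D (contract 1 x)) := rfl

lemma interweave_decomposition {ξ η ζ : Lam}
    (hξ : ξ ∈ lamOn {i : ℕ | 2 ≤ i}) (hη : η ∈ lamOn {i : ℕ | 3 ≤ i})
    (hζ : ζ ∈ lamOn {i : ℕ | 3 ≤ i}) :
    interweave D (wedge (e 1) ξ + wedge (e 2) η + ζ)
      = wedge (e 1) ξ + wedge (e 2) (η + D ξ) + ζ := by
  have hI2 : (1 : ℕ) ∉ {i : ℕ | 2 ≤ i} := by simp
  have hI3 : (1 : ℕ) ∉ {i : ℕ | 3 ≤ i} := by simp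
  simp only [interweave_apply, map_add, contract_one_e_one_wedge, contract_one_e_two_wedge,
    contract_eq_zero_of_mem_lamOn hI2 hξ, contract_eq_zero_of_mem_lamOn hI3 hη,
    contract_eq_zero_of_mem_lamOn hI3 hζ, map_zero, wedge_zero_right, add_zero, wedge_add_right]
  abel

lemma exists_decomposition_single {S : Finset ℕ} (hS : ↑S ⊆ {i : ℕ | 1 ≤ i}) :
    ∃ ξ ∈ lamOn {i : ℕ | 2 ≤ i}, ∃ η ∈ lamOn {i : ℕ | 3 ≤ i}, ∃ ζ ∈ lamOn {i : ℕ | 3 ≤ i},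
      single S 1 = wedge (e 1) ξ + wedge (e 2) η + ζ := by
  have hS' : ∀ a ∈ S, 1 ≤ a := fun a ha => hS ha
  by_cases h1 : 1 ∈ S
  · refine ⟨single (S.erase 1) 1, single_mem_lamOn fun a ha => ?_, 0, zero_mem _, 0, zero_mem _,
      ?_⟩
    · obtain ⟨ha1, ha⟩ := Finset.mem_erase.1 ha
      exact (show 2 ≤ a by have := hS' a ha; omega)
    · rw [e_wedge_single, if_neg (Finset.notMem_erase 1 S), Finset.insert_erase h1]
      simp
  by_cases h2 : 2 ∈ S
  · refine ⟨0, zero_mem _, single (S.erase 2) 1, single_mem_lamOn fun a ha => ?_, 0, zero_mem _,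
      ?_⟩
    · obtain ⟨ha2, ha⟩ := Finset.mem_erase.1 ha
      have ha1 : a ≠ 1 := by rintro rfl; exact h1 ha
      exact (show 3 ≤ a by have := hS' a ha; omega)
    · rw [e_wedge_single, if_neg (Finset.notMem_erase 2 S), Finset.insert_erase h2]
      simp
  · refine ⟨0, zero_mem _, 0, zero_mem _, single S 1, single_mem_lamOn fun a ha => ?_, by simp⟩
    have ha1 : a ≠ 1 := by rintro rfl; exact h1 ha
    have ha2 : a ≠ 2 := by rintro rfl; exact h2 ha
    exact (show 3 ≤ a by have := hS' a ha; omega)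

lemma eqOn_interweave {f : Module.End K2 Lam}
    (hf : ∀ ξ ∈ lamOn {i : ℕ | 2 ≤ i}, ∀ η ∈ lamOn {i : ℕ | 3 ≤ i}, ∀ ζ ∈ lamOn {i : ℕ | 3 ≤ i},
      f (wedge (e 1) ξ + wedge (e 2) η + ζ) = wedge (e 1) ξ + wedge (e 2) (η + D ξ) + ζ) :
    Set.EqOn f (interweave D) (lamOn {i : ℕ | 1 ≤ i}) := by
  refine LinearMap.eqOn_span' ?_
  rintro _ ⟨S, hS, rfl⟩
  obtain ⟨ξ, hξ, η, hη, ζ, hζ, hS⟩ := exists_decomposition_single hS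
  rw [hS, hf ξ hξ η hη ζ hζ, interweave_decomposition hξ hη hζ]

variable (hD : IsDerivation D) (hD2 : D (e 2) = 0)
include hD hD2

lemma interweave_interweave (x : Lam) : interweave D (interweave D x) = x := by
  simp only [interweave_apply, map_add, contract_one_e_two_wedge,
    hD.map_wedge_of_map_eq_zero hD2, e_wedge_e_wedge, add_zero]
  rw [add_assoc, lam_add_self, add_zero]

variable (hD1 : D (e 1) = 0)
include hD1

lemma interweave_dZero {x : Lam} (hx : contract 1 (D x) = D (contract 1 x)) :
    interweave D (dZero D x) = dTwo D (interweave D x) := by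
  simp only [interweave_apply, dZero_apply, dTwo_apply, map_add, contract_one_e_one_wedge, hx,
    hD.map_wedge_of_map_eq_zero hD1, hD.map_wedge_of_map_eq_zero hD2, e_wedge_e_wedge,
    wedge_add_right, add_zero]
  rw [wedge_left_comm (e 2) (e 1)]
  abel

lemma interweave_dTwo {x : Lam} (hx : contract 1 (D x) = D (contract 1 x)) :
    interweave D (dTwo D x) = dZero D (interweave D x) := by
  simp only [interweave_apply, dZero_apply, dTwo_apply, map_add, contract_one_e_one_wedge,
    contract_one_e_two_wedge, hx, hD.map_wedge_of_map_eq_zero hD1,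
    hD.map_wedge_of_map_eq_zero hD2, e_wedge_e_wedge, wedge_add_right, add_zero]
  rw [wedge_left_comm (e 2) (e 1), add_right_comm, add_assoc, ← add_assoc (wedge (e 2) _),
    lam_add_self, zero_add]

end Interweaving

section MapsTo

variable {D : Module.End K2 Lam} {I : Set ℕ} (hD : Set.MapsTo D (lamOn I) (lamOn I))
include hD

lemma mapsTo_dZero (h1 : 1 ∈ I) : Set.MapsTo (dZero D) (lamOn I) (lamOn I) := fun _ hx =>
  e_wedge_mem_lamOn h1 (hD hx)

lemma mapsTo_dTwo (h1 : 1 ∈ I) (h2 : 2 ∈ I) : Set.MapsTo (dTwo D) (lamOn I) (lamOn I) :=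
  fun _ hx => add_mem (e_wedge_mem_lamOn h1 (hD hx)) (e_wedge_mem_lamOn h2 (hD (hD hx)))

lemma mapsTo_interweave (h2 : 2 ∈ I) : Set.MapsTo (interweave D) (lamOn I) (lamOn I) :=
  fun _ hx => add_mem hx (e_wedge_mem_lamOn h2 (hD (mapsTo_contract_lamOn 1 hx)))

end MapsTo

section Lowering

variable {D : Module.End K2 Lam} (hD : IsDerivation D) (hD1 : D (e 1) = 0) (hD2 : D (e 2) = 0)
  (hDi : ∀ i, 3 ≤ i → D (e i) = e (i - 1))
include hD hD1 hD2 hDi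

lemma mapsTo_lamOn_pos_of_lowering :
    Set.MapsTo D (lamOn {i : ℕ | 1 ≤ i}) (lamOn {i : ℕ | 1 ≤ i}) :=
  hD.mapsTo_lamOn fun i (hi : 1 ≤ i) => by
    rcases (by omega : i = 1 ∨ i = 2 ∨ 3 ≤ i) with rfl | rfl | hi3
    · simp [hD1]
    · simp [hD2]
    · rw [hDi i hi3]
      exact e_mem_lamOn (show 1 ≤ i - 1 by omega)

lemma contract_one_comm_of_lowering {x : Lam} (hx : x ∈ lamOn {i : ℕ | 1 ≤ i}) :
    contract 1 (D x) = D (contract 1 x) := by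
  refine sub_eq_zero.1 <| ((isDerivation_contract 1).commutator hD).eqOn_lamOn
    isDerivation_zero (fun i (hi : 1 ≤ i) => ?_) hx
  rcases (by omega : i = 1 ∨ i = 2 ∨ 3 ≤ i) with rfl | rfl | hi3
  · simp [hD1, contract_e, hD.map_one]
  · simp [hD2, contract_e]
  · simp [hDi i hi3, contract_e, show i - 1 ≠ 1 by omega, show i ≠ 1 by omega]

lemma eqOn_dZero_of_lowering {d0 : Module.End K2 Lam} (hd0 : IsDerivation d0)
    (h01 : d0 (e 1) = 0) (h02 : d0 (e 2) = 0)
    (h0i : ∀ i, 3 ≤ i → d0 (e i) = wedge (e 1) (e (i - 1))) :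
    Set.EqOn d0 (dZero D) (lamOn {i : ℕ | 1 ≤ i}) :=
  hd0.eqOn_lamOn (hD.wedgeLeft_mul _) fun i (hi : 1 ≤ i) => by
    rcases (by omega : i = 1 ∨ i = 2 ∨ 3 ≤ i) with rfl | rfl | hi3
    · simp [dZero_apply, h01, hD1]
    · simp [dZero_apply, h02, hD2]
    · rw [dZero_apply, h0i i hi3, hDi i hi3]

lemma eqOn_dTwo_of_lowering {d2 : Module.End K2 Lam} (hd2 : IsDerivation d2)
    (h21 : d2 (e 1) = 0) (h22 : d2 (e 2) = 0)
    (h23 : d2 (e 3) = wedge (e 1) (e 2)) (h24 : d2 (e 4) = wedge (e 1) (e 3))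
    (h2i : ∀ i, 5 ≤ i → d2 (e i) = wedge (e 1) (e (i - 1)) + wedge (e 2) (e (i - 2))) :
    Set.EqOn d2 (dTwo D) (lamOn {i : ℕ | 1 ≤ i}) :=
  hd2.eqOn_lamOn ((hD.wedgeLeft_mul _).add (hD.mul_self.wedgeLeft_mul _)) fun i (hi : 1 ≤ i) => by
    have hD3 : D (e 3) = e 2 := hDi 3 le_rfl
    rcases (by omega : i = 1 ∨ i = 2 ∨ i = 3 ∨ i = 4 ∨ 5 ≤ i) with rfl | rfl | rfl | rfl | hi5
    · simp [dTwo_apply, h21, hD1]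
    · simp [dTwo_apply, h22, hD2]
    · simp [dTwo_apply, h23, hD3, hD2]
    · simp [dTwo_apply, h24, hDi 4 (by norm_num), hD3, e_wedge_self]
    · rw [dTwo_apply, h2i i hi5, hDi i (by omega), hDi (i - 1) (by omega),
        show i - 1 - 1 = i - 2 by omega]

end Lowering

section Intertwiner

variable {R M : Type*} [Semiring R] [AddCommMonoid M] [Module R M] {φ a b : M →ₗ[R] M}
  {W : Submodule R M} (hφ : Set.MapsTo φ W W) (hφφ : ∀ x ∈ W, φ (φ x) = x)
  (hab : ∀ x ∈ W, φ (a x) = b (φ x)) (hba : ∀ x ∈ W, φ (b x) = a (φ x))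
include hφ hφφ hab hba

theorem bijOn_inf_ker_of_intertwines :
    Set.BijOn φ ↑(W ⊓ LinearMap.ker a) ↑(W ⊓ LinearMap.ker b) := by
  refine Set.InvOn.bijOn ⟨fun x hx => hφφ x hx.1, fun x hx => hφφ x hx.1⟩ ?_ ?_
  · rintro x ⟨hxW, hx : a x = 0⟩
    exact ⟨hφ hxW, show b (φ x) = 0 by rw [← hab x hxW, hx, map_zero]⟩
  · rintro x ⟨hxW, hx : b x = 0⟩
    exact ⟨hφ hxW, show a (φ x) = 0 by rw [← hba x hxW, hx, map_zero]⟩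

theorem bijOn_map_of_intertwines (ha : Set.MapsTo a W W) (hb : Set.MapsTo b W W) :
    Set.BijOn φ ↑(W.map a) ↑(W.map b) := by
  refine Set.InvOn.bijOn (f' := φ) ⟨?_, ?_⟩ ?_ ?_
  · rintro _ ⟨x, hx, rfl⟩
    exact hφφ _ (ha hx)
  · rintro _ ⟨x, hx, rfl⟩
    exact hφφ _ (hb hx)
  · rintro _ ⟨x, hx, rfl⟩
    exact ⟨φ x, hφ hx, (hab x hx).symm⟩
  · rintro _ ⟨x, hx, rfl⟩
    exact ⟨φ x, hφ hx, (hba x hx).symm⟩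

end Intertwiner

/-- Proposition: let `d0` and `d2` be the Chevalley–Eilenberg differentials of `𝔪₀` and `𝔪₂`
on `Λ(V*) = Λ(e¹, e², …)`, let `D1` be the unique derivation with `D1 e¹ = D1 e² = 0`,
`D1 eⁱ = e^{i−1}` for `i > 2`, and let `f` be the linear involution which is the identity on
scalars and on `V*` and which sends `e¹ ∧ ξ + e² ∧ η + ζ` to `e¹ ∧ ξ + e² ∧ (η + D1 ξ) + ζ`
for `ξ ∈ Λ(e²,e³,…)` and `η, ζ ∈ Λ(e³,e⁴,…)` (this uniquely determines the linear map `f` on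
`Λ(V*)`, by the uniqueness of the decomposition; the stated rule also forces `f` to be the
identity on scalars and on `V*`). Then `f ∘ d0 = d2 ∘ f` and `f ∘ d2 = d0 ∘ f` on `Λ(V*)`;
consequently `f` maps the `d0`-cocycles bijectively onto the `d2`-cocycles and the
`d0`-coboundaries bijectively onto the `d2`-coboundaries. -/
theorem interweaving_map_f
    (d0 d2 D1 f : Module.End K2 Lam)
    (hd0 : IsDerivation d0) (h01 : d0 (e 1) = 0) (h02 : d0 (e 2) = 0)
    (h0i : ∀ i, 3 ≤ i → d0 (e i) = wedge (e 1) (e (i - 1)))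
    (hd2 : IsDerivation d2) (h21 : d2 (e 1) = 0) (h22 : d2 (e 2) = 0)
    (h23 : d2 (e 3) = wedge (e 1) (e 2)) (h24 : d2 (e 4) = wedge (e 1) (e 3))
    (h2i : ∀ i, 5 ≤ i → d2 (e i) = wedge (e 1) (e (i - 1)) + wedge (e 2) (e (i - 2)))
    (hD : IsDerivation D1) (hD1 : D1 (e 1) = 0) (hD2 : D1 (e 2) = 0)
    (hDi : ∀ i, 3 ≤ i → D1 (e i) = e (i - 1))
    (hf : ∀ ξ ∈ lamOn {i : ℕ | 2 ≤ i}, ∀ η ∈ lamOn {i : ℕ | 3 ≤ i},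
      ∀ ζ ∈ lamOn {i : ℕ | 3 ≤ i},
        f (wedge (e 1) ξ + wedge (e 2) η + ζ)
          = wedge (e 1) ξ + wedge (e 2) (η + D1 ξ) + ζ)
    (V : Set ℕ) (hV : V = {i : ℕ | 1 ≤ i}) :
    (∀ ω ∈ lamOn V, f (d0 ω) = d2 (f ω) ∧ f (d2 ω) = d0 (f ω)) ∧
    Set.BijOn ⇑f ↑(lamOn V ⊓ LinearMap.ker d0) ↑(lamOn V ⊓ LinearMap.ker d2) ∧
    Set.BijOn ⇑f ↑(Submodule.map d0 (lamOn V)) ↑(Submodule.map d2 (lamOn V)) := by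
  subst hV
  have hDV := mapsTo_lamOn_pos_of_lowering hD hD1 hD2 hDi
  have hcomm := fun x (hx : x ∈ lamOn _) => contract_one_comm_of_lowering hD hD1 hD2 hDi hx
  have hd0' := eqOn_dZero_of_lowering hD hD1 hD2 hDi hd0 h01 h02 h0i
  have hd2' := eqOn_dTwo_of_lowering hD hD1 hD2 hDi hd2 h21 h22 h23 h24 h2i
  have hf' := eqOn_interweave hf
  have hd0V := (mapsTo_dZero hDV (show 1 ≤ 1 from le_rfl)).congr hd0'.symm
  have hd2V := (mapsTo_dTwo hDV (show 1 ≤ 1 from le_rfl) (show 1 ≤ 2 by norm_num)).congr hd2'.symm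
  have hfV := (mapsTo_interweave hDV (show 1 ≤ 2 by norm_num)).congr hf'.symm
  have h02 : ∀ x ∈ lamOn _, f (d0 x) = d2 (f x) := fun x hx => by
    rw [hf' (hd0V hx), hd2' (hfV hx), hd0' hx, hf' hx, interweave_dZero hD hD2 hD1 (hcomm x hx)]
  have h20 : ∀ x ∈ lamOn _, f (d2 x) = d0 (f x) := fun x hx => by
    rw [hf' (hd2V hx), hd0' (hfV hx), hd2' hx, hf' hx, interweave_dTwo hD hD2 hD1 (hcomm x hx)]
  have hff : ∀ x ∈ lamOn _, f (f x) = x := fun x hx => by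
    rw [hf' (hfV hx), hf' hx, interweave_interweave hD hD2]
  exact ⟨fun x hx => ⟨h02 x hx, h20 x hx⟩, bijOn_inf_ker_of_intertwines hfV hff h02 h20,
    bijOn_map_of_intertwines hfV hff h02 h20 hd0V hd2V⟩
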